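/- Fix an integer n ≥ 1. Let ψ be the C-algebra homomorphism from the polynomial ring C[s, X_1, …, X_{n+3}] onto the quotient ring C[s, X_1, X_2, X_{n+3}]/(s X_1 X_2 − (X_1 + X_2)) that fixes s, X_1, X_2, sends X_{n+3} to (the class of) X_{n+3}, and sends X_{k} to (the class of) s^{n+3−k} X_{n+3} for k = 3, …, n+2. Then the kernel of ψ is exactly the ideal generated by the 2×2 minors of the 2×(n+2) matrix whose columns are (s, 1), (X_1 + X_2, X_1 X_2), and (X_{k+2}, X_{k+3}) for k = 1, …, n. -/

import Mathlib

/-!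
The map `ψ` is the substitution `θ : ℂ[s, X_1, …, X_{n+3}] → ℂ[s, X_1, X_2, X_{n+3}]` followed
by the quotient map, and `θ` has the section `ι` keeping the variables `s, X_1, X_2, X_{n+3}`.
Modulo the minors with the first column `(s, 1)`, `X_k ≡ s X_{k+1}` for `3 ≤ k ≤ n+2`, hence
`X_k ≡ s^{n+3-k} X_{n+3} = ι (θ X_k)`, and so `f ≡ ι (θ f)` for every `f`. If `ψ f = 0`, then
`θ f` is a multiple of `s X_1 X_2 - (X_1 + X_2)`, whose image under `ι` is the minor of the first
two columns. Conversely, `ψ` maps the first row of the matrix to `s` times the second, so every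
minor lies in the kernel.
-/

open MvPolynomial

/-- The hypersurface ring `C[s, X_1, X_2, X_{n+3}]/(s X_1 X_2 − (X_1 + X_2))`, with
variables `s, X_1, X_2, X_{n+3}` indexed as `X 0, X 1, X 2, X 3`. -/
noncomputable abbrev chartRing1 : Type :=
  MvPolynomial (Fin 4) ℂ ⧸
    Ideal.span {(X 0 * X 1 * X 2 - (X 1 + X 2) : MvPolynomial (Fin 4) ℂ)}

/-- The map `C[s, X_1, …, X_{n+3}] → C[s,X_1,X_2,X_{n+3}]/(sX_1X_2 − (X_1+X_2))`
fixing `s, X_1, X_2`, sending `X_{n+3} ↦ X_{n+3}` and `X_k ↦ s^{n+3−k} X_{n+3}` for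
`k = 3, …, n+2`. The source variables are indexed by `Fin (n+4)` with `s = X 0`
and `X_j = X j`; in the target `s, X_1, X_2, X_{n+3}` are `X 0, X 1, X 2, X 3`. -/
noncomputable def chartHom1 (n : ℕ) :
    MvPolynomial (Fin (n + 4)) ℂ →ₐ[ℂ] chartRing1 :=
  aeval fun i : Fin (n + 4) =>
    if h : (i : ℕ) ≤ 2 then Ideal.Quotient.mk _ (X ⟨(i : ℕ), by omega⟩)
    else if (i : ℕ) = n + 3 then Ideal.Quotient.mk _ (X 3)
    else Ideal.Quotient.mk _ (X 0 ^ (n + 3 - (i : ℕ)) * X 3)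

/-- First row `(s, X_1 + X_2, X_3, X_4, …, X_{n+2})` of the matrix. -/
noncomputable def ch1Row1 (n : ℕ) : Fin (n + 2) → MvPolynomial (Fin (n + 4)) ℂ := fun k =>
  if (k : ℕ) = 0 then X 0
  else if (k : ℕ) = 1 then X 1 + X 2
  else X ⟨(k : ℕ) + 1, by omega⟩

/-- Second row `(1, X_1 X_2, X_4, X_5, …, X_{n+3})` of the matrix. -/
noncomputable def ch1Row2 (n : ℕ) : Fin (n + 2) → MvPolynomial (Fin (n + 4)) ℂ := fun k =>
  if (k : ℕ) = 0 then 1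
  else if (k : ℕ) = 1 then X 1 * X 2
  else X ⟨(k : ℕ) + 2, by omega⟩

section General

variable {A : Type*} [CommRing A]

theorem sub_pow_mul_mem_of_forall_sub_mul_mem {I : Ideal A} (s : A) (a : ℕ → A) (i : ℕ) :
    ∀ k, (∀ j, i ≤ j → j < i + k → a j - s * a (j + 1) ∈ I) → a i - s ^ k * a (i + k) ∈ I
  | 0, _ => by simp
  | k + 1, h => by
    have hk := sub_pow_mul_mem_of_forall_sub_mul_mem s a i k fun j hij hjk => h j hij (by omega)
    have hstep := h (i + k) (by omega) (by omega)
    have hsum : a i - s ^ (k + 1) * a (i + k + 1) =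
        (a i - s ^ k * a (i + k)) + s ^ k * (a (i + k) - s * a (i + k + 1)) := by ring
    rw [← add_assoc, hsum]
    exact I.add_mem hk (I.mul_mem_left _ hstep)

theorem MvPolynomial.sub_apply_mem_of_forall_X_sub_apply_mem {R σ : Type*} [CommRing R]
    {I : Ideal (MvPolynomial σ R)} (φ : MvPolynomial σ R →ₐ[R] MvPolynomial σ R)
    (h : ∀ i, X i - φ (X i) ∈ I) (f : MvPolynomial σ R) : f - φ f ∈ I := by
  have hφ : (Ideal.Quotient.mkₐ R I).comp φ = Ideal.Quotient.mkₐ R I :=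
    algHom_ext fun i => (Ideal.Quotient.eq.mpr (h i)).symm
  exact Ideal.Quotient.eq.mp (DFunLike.congr_fun hφ f).symm

theorem Ideal.comap_eq_of_forall_sub_mem {B F G : Type*} [CommRing B] [FunLike F A B]
    [RingHomClass F A B] [FunLike G B A] [RingHomClass G B A] (θ : F) (ι : G)
    {I : Ideal A} {J : Ideal B} (hsub : ∀ f, f - ι (θ f) ∈ I) (hJ : J.map ι ≤ I)
    (hI : I ≤ J.comap θ) : J.comap θ = I := by
  refine le_antisymm (fun f hf => ?_) hI
  have hι : ι (θ f) ∈ I := hJ (Ideal.mem_map_of_mem ι hf)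
  simpa using I.add_mem (hsub f) hι

end General

def chartEmb1 (n : ℕ) : Fin 4 → Fin (n + 4) := ![0, 1, 2, Fin.last (n + 3)]

noncomputable def chartSubst1 (n : ℕ) :
    MvPolynomial (Fin (n + 4)) ℂ →ₐ[ℂ] MvPolynomial (Fin 4) ℂ :=
  aeval fun i : Fin (n + 4) =>
    if h : (i : ℕ) ≤ 2 then X ⟨(i : ℕ), by omega⟩
    else if (i : ℕ) = n + 3 then X 3
    else X 0 ^ (n + 3 - (i : ℕ)) * X 3

noncomputable def chartMinorIdeal1 (n : ℕ) : Ideal (MvPolynomial (Fin (n + 4)) ℂ) :=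
  Ideal.span {m | ∃ i j : Fin (n + 2),
    m = ch1Row1 n i * ch1Row2 n j - ch1Row1 n j * ch1Row2 n i}

theorem chartHom1_eq_comp (n : ℕ) :
    chartHom1 n = (Ideal.Quotient.mkₐ ℂ _).comp (chartSubst1 n) := by
  rw [chartSubst1, comp_aeval, chartHom1]
  congr 1
  funext i
  split_ifs <;> simp

theorem chartSubst1_comp_rename (n : ℕ) :
    (chartSubst1 n).comp (rename (chartEmb1 n)) = AlgHom.id ℂ _ := by
  refine algHom_ext fun k => ?_
  fin_cases k <;>
    simp [chartSubst1, chartEmb1, Nat.mod_eq_of_lt (show 2 < n + 4 by omega)]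

theorem minor_mem_chartMinorIdeal1 (n : ℕ) (i j : Fin (n + 2)) :
    ch1Row1 n i * ch1Row2 n j - ch1Row1 n j * ch1Row2 n i ∈ chartMinorIdeal1 n :=
  Ideal.subset_span ⟨i, j, rfl⟩

theorem X_sub_X_zero_mul_X_succ_mem_chartMinorIdeal1 (n j : ℕ) (h3 : 3 ≤ j) (hj : j ≤ n + 2) :
    X ⟨j, by omega⟩ - X 0 * X ⟨j + 1, by omega⟩ ∈ chartMinorIdeal1 n := by
  have hm := minor_mem_chartMinorIdeal1 n ⟨j - 1, by omega⟩ 0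
  convert hm using 1
  simp [ch1Row1, ch1Row2, show j - 1 ≠ 0 by omega, show j ≠ 2 by omega,
    show j - 1 + 1 = j by omega, show j - 1 + 2 = j + 1 by omega]

theorem X_sub_X_zero_pow_mul_X_last_mem_chartMinorIdeal1 (n j : ℕ) (h3 : 3 ≤ j)
    (hj : j ≤ n + 3) :
    X ⟨j, by omega⟩ - X 0 ^ (n + 3 - j) * X (Fin.last (n + 3)) ∈ chartMinorIdeal1 n := by
  let a : ℕ → MvPolynomial (Fin (n + 4)) ℂ := fun m => if h : m < n + 4 then X ⟨m, h⟩ else 0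
  have hchain := sub_pow_mul_mem_of_forall_sub_mul_mem (X 0) a j (n + 3 - j) fun k hjk hk => by
    simpa [a, show k < n + 4 by omega, show k + 1 < n + 4 by omega] using
      X_sub_X_zero_mul_X_succ_mem_chartMinorIdeal1 n k (by omega) (by omega)
  simpa [a, show j < n + 4 by omega, show j + (n + 3 - j) = n + 3 by omega, Fin.last] using hchain

theorem X_sub_rename_chartSubst1_X_mem_chartMinorIdeal1 (n : ℕ) (i : Fin (n + 4)) :
    X i - rename (chartEmb1 n) (chartSubst1 n (X i)) ∈ chartMinorIdeal1 n := by
  obtain ⟨j, hj⟩ := i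
  rw [chartSubst1, aeval_X]
  split_ifs with h2 h3 <;> simp only at *
  · interval_cases j <;> simp [chartEmb1, show (⟨2, by omega⟩ : Fin (n + 4)) = 2 from rfl]
  · subst h3
    simp [chartEmb1, Fin.last]
  · simpa [chartEmb1] using
      X_sub_X_zero_pow_mul_X_last_mem_chartMinorIdeal1 n j (by omega) (by omega)

theorem chartRing1_mk_X_one_add_mk_X_two :
    (Ideal.Quotient.mk _ (X 1) + Ideal.Quotient.mk _ (X 2) : chartRing1) =
      Ideal.Quotient.mk _ (X 0) * (Ideal.Quotient.mk _ (X 1) * Ideal.Quotient.mk _ (X 2)) := by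
  rw [← map_mul, ← map_mul, ← map_add, Ideal.Quotient.eq, Ideal.mem_span_singleton']
  exact ⟨-1, by ring⟩

theorem chartHom1_ch1Row1 (n : ℕ) (k : Fin (n + 2)) :
    chartHom1 n (ch1Row1 n k) = chartHom1 n (X 0) * chartHom1 n (ch1Row2 n k) := by
  obtain ⟨_ | _ | k, hk⟩ := k
  · simp [ch1Row1, ch1Row2]
  · simpa [ch1Row1, ch1Row2, chartHom1, Nat.mod_eq_of_lt (show 2 < n + 4 by omega)] using
      chartRing1_mk_X_one_add_mk_X_two
  · rcases (show k + 1 = n ∨ k + 1 < n by omega) with rfl | hkn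
    · simp [ch1Row1, ch1Row2, chartHom1]
    · simp [ch1Row1, ch1Row2, chartHom1, hkn.ne, (show k ≠ n by omega),
        show n - k = n - (k + 1) + 1 by omega, pow_succ', mul_assoc]

theorem stmt12_general (n : ℕ) :
    Function.Surjective (chartHom1 n) ∧
    RingHom.ker (chartHom1 n) =
      Ideal.span {m | ∃ i j : Fin (n + 2),
        m = ch1Row1 n i * ch1Row2 n j - ch1Row1 n j * ch1Row2 n i} := by
  have hsection : Function.LeftInverse (chartSubst1 n) (rename (chartEmb1 n)) :=
    DFunLike.congr_fun (chartSubst1_comp_rename n)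
  change _ ∧ _ = chartMinorIdeal1 n
  refine ⟨?_, ?_⟩
  · rw [chartHom1_eq_comp]
    exact (Ideal.Quotient.mkₐ_surjective ℂ _).comp hsection.surjective
  have hker : RingHom.ker (chartHom1 n) =
      (Ideal.span {X 0 * X 1 * X 2 - (X 1 + X 2)}).comap (chartSubst1 n) := by
    ext f
    simp [chartHom1_eq_comp, Ideal.Quotient.eq_zero_iff_mem]
  rw [hker]
  refine Ideal.comap_eq_of_forall_sub_mem (chartSubst1 n) (rename (chartEmb1 n))
    (sub_apply_mem_of_forall_X_sub_apply_mem ((rename _).comp (chartSubst1 n))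
      (X_sub_rename_chartSubst1_X_mem_chartMinorIdeal1 n)) ?_ ?_
  · rw [Ideal.map_span, Set.image_singleton, Ideal.span_le, Set.singleton_subset_iff]
    simpa [ch1Row1, ch1Row2, chartEmb1, mul_assoc] using minor_mem_chartMinorIdeal1 n 0 1
  · rw [← hker, chartMinorIdeal1, Ideal.span_le]
    rintro _ ⟨i, j, rfl⟩
    simp only [SetLike.mem_coe, RingHom.mem_ker, map_sub, map_mul, chartHom1_ch1Row1]
    ring

theorem stmt12 (n : ℕ) (hn : 1 ≤ n) :
    Function.Surjective (chartHom1 n) ∧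
    RingHom.ker (chartHom1 n) =
      Ideal.span {m | ∃ i j : Fin (n + 2),
        m = ch1Row1 n i * ch1Row2 n j - ch1Row1 n j * ch1Row2 n i} :=
  stmt12_general n
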